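/- arXiv:1304.1218 — 4 statements merged into one kernel-verified Lean document; each statement's English description precedes it below -/
import Mathlib

section
/- Let V be a Hausdorff topological real vector space and K a strict closed convex cone in V with associated partial order ≤ (x ≤ y iff y − x ∈ K). Then any nonempty subset S of V which is directed with respect to ≤ and contained in a compact subset of V has a least upper bound with respect to ≤ in V. -/
/-!
Since a convex cone is closed under addition, `≤` is transitive, so the tails `{y ∈ S | x ≤ y}`,
`x ∈ S`, of the directed set `S` form a filter base of nonempty subsets of the compact set `T`
and have a cluster point `b`. Since `K` is closed, the sets `{w | x ≤ w}` and
`{w | w ≤ c}` are closed; the first contains the tail of `x` and the second, for an upper bound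
`c` of `S`, contains all of `S`. Hence `b` is an upper bound of `S` below every upper bound.
-/

open Filter

theorem Convex.add_mem_of_smul_mem {𝕜 E : Type*} [Field 𝕜] [LinearOrder 𝕜]
    [IsStrictOrderedRing 𝕜] [AddCommMonoid E] [Module 𝕜 E] {K : Set E} (hKconv : Convex 𝕜 K)
    (hKcone : ∀ x ∈ K, ∀ t : 𝕜, 0 ≤ t → t • x ∈ K) {u v : E} (hu : u ∈ K) (hv : v ∈ K) :
    u + v ∈ K := by
  have hmid : (2⁻¹ : 𝕜) • u + (2⁻¹ : 𝕜) • v ∈ K :=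
    hKconv hu hv (by positivity) (by positivity) (by norm_num)
  have hdouble : (2 : 𝕜) • ((2⁻¹ : 𝕜) • u + (2⁻¹ : 𝕜) • v) = u + v := by
    rw [smul_add, smul_smul, smul_smul, mul_inv_cancel₀ two_ne_zero, one_smul, one_smul]
  simpa only [hdouble] using hKcone _ hmid 2 zero_le_two

theorem IsCompact.exists_forall_mem_closure_of_directed {X ι : Type*} [TopologicalSpace X]
    [Nonempty ι] {T : Set X} (hT : IsCompact T) {s : ι → Set X} (hdir : Directed (· ⊇ ·) s)
    (hne : ∀ i, (s i).Nonempty) (hsub : ∀ i, s i ⊆ T) :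
    ∃ b ∈ T, ∀ i, b ∈ closure (s i) := by
  have : (⨅ i, 𝓟 (s i)).NeBot :=
    iInf_neBot_of_directed'
      (fun i j => let ⟨k, hki, hkj⟩ := hdir i j; ⟨k, principal_mono.2 hki, principal_mono.2 hkj⟩)
      fun i => principal_neBot_iff.2 (hne i)
  have hle : ⨅ i, 𝓟 (s i) ≤ 𝓟 T :=
    iInf_le_of_le (Classical.arbitrary ι) (principal_mono.2 (hsub _))
  obtain ⟨b, hbT, hb⟩ := hT hle
  exact ⟨b, hbT, fun i => hb.mem_closure_of_mem _ (mem_iInf_of_mem i (mem_principal_self _))⟩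

section ConeTail

variable {V : Type*} [AddCommGroup V] (K S : Set V)

def coneTail (x : V) : Set V := {y | y ∈ S ∧ y - x ∈ K}

variable {K S}

theorem directed_coneTail (hKadd : ∀ u ∈ K, ∀ v ∈ K, u + v ∈ K)
    (hSdir : ∀ x ∈ S, ∀ y ∈ S, ∃ z ∈ S, z - x ∈ K ∧ z - y ∈ K) :
    Directed (· ⊇ ·) fun x : S => coneTail K S x := by
  rintro ⟨x, hx⟩ ⟨y, hy⟩
  obtain ⟨z, hz, hzx, hzy⟩ := hSdir x hx y hy
  refine ⟨⟨z, hz⟩, ?_, ?_⟩ <;> rintro w ⟨hwS, hwz⟩ <;> refine ⟨hwS, ?_⟩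
  · simpa only [sub_add_sub_cancel] using hKadd _ hwz _ hzx
  · simpa only [sub_add_sub_cancel] using hKadd _ hwz _ hzy

variable [TopologicalSpace V] [ContinuousSub V]

theorem closure_coneTail_subset_above (hKclosed : IsClosed K) (x : V) :
    closure (coneTail K S x) ⊆ {w | w - x ∈ K} :=
  (hKclosed.preimage (continuous_id.sub continuous_const)).closure_subset_iff.2
    fun _ hw => hw.2

theorem closure_coneTail_subset_below (hKclosed : IsClosed K) {c : V}
    (hc : ∀ y ∈ S, c - y ∈ K) (x : V) :
    closure (coneTail K S x) ⊆ {w | c - w ∈ K} :=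
  (hKclosed.preimage (continuous_const.sub continuous_id)).closure_subset_iff.2
    fun w hw => hc w hw.1

end ConeTail

theorem directed_set_in_compact_has_lub_general
    (V : Type*) [AddCommGroup V] [Module ℝ V] [TopologicalSpace V]
    [IsTopologicalAddGroup V]
    (K : Set V) (hKclosed : IsClosed K) (hKconv : Convex ℝ K)
    (hKcone : ∀ x ∈ K, ∀ t : ℝ, 0 ≤ t → t • x ∈ K)
    (S : Set V) (hSne : S.Nonempty)
    (hSdir : ∀ x ∈ S, ∀ y ∈ S, ∃ z ∈ S, z - x ∈ K ∧ z - y ∈ K)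
    (T : Set V) (hT : IsCompact T) (hST : S ⊆ T) :
    ∃ b : V, (∀ x ∈ S, b - x ∈ K) ∧
      ∀ c : V, (∀ x ∈ S, c - x ∈ K) → c - b ∈ K := by
  have : Nonempty S := hSne.to_subtype
  have hKadd : ∀ u ∈ K, ∀ v ∈ K, u + v ∈ K := fun _ hu _ hv =>
    hKconv.add_mem_of_smul_mem hKcone hu hv
  have htail_ne : ∀ x : S, (coneTail K S x).Nonempty := fun ⟨x, hx⟩ => by
    obtain ⟨z, hz, hzx, -⟩ := hSdir x hx x hx
    exact ⟨z, hz, hzx⟩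
  obtain ⟨b, -, hb⟩ := hT.exists_forall_mem_closure_of_directed
    (directed_coneTail hKadd hSdir) htail_ne fun _ _ hy => hST hy.1
  refine ⟨b, fun x hx => closure_coneTail_subset_above hKclosed x (hb ⟨x, hx⟩),
    fun c hc => ?_⟩
  obtain ⟨x, hx⟩ := hSne
  exact closure_coneTail_subset_below hKclosed hc x (hb ⟨x, hx⟩)

/-- In a Hausdorff topological real vector space, with a strict closed convex cone `K`
and the order `x ≤ y ↔ y - x ∈ K`, every nonempty directed subset `S` contained in a
compact set has a least upper bound. -/
theorem directed_set_in_compact_has_lub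
    (V : Type*) [AddCommGroup V] [Module ℝ V] [TopologicalSpace V]
    [IsTopologicalAddGroup V] [ContinuousSMul ℝ V] [T2Space V]
    (K : Set V) (hKclosed : IsClosed K) (hKconv : Convex ℝ K)
    (hKcone : ∀ x ∈ K, ∀ t : ℝ, 0 ≤ t → t • x ∈ K)
    (hKstrict : K ∩ (-K) = {0})
    (S : Set V) (hSne : S.Nonempty)
    (hSdir : ∀ x ∈ S, ∀ y ∈ S, ∃ z ∈ S, z - x ∈ K ∧ z - y ∈ K)
    (T : Set V) (hT : IsCompact T) (hST : S ⊆ T) :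
    ∃ b : V, (∀ x ∈ S, b - x ∈ K) ∧
      ∀ c : V, (∀ x ∈ S, c - x ∈ K) → c - b ∈ K :=
  directed_set_in_compact_has_lub_general V K hKclosed hKconv hKcone S hSne hSdir T hT hST
end

section
/- Let V be a finite-dimensional real normed vector space, K ⊆ V a strict closed convex cone, and β ∈ K. Then the set {α ∈ V | α ∈ K and β − α ∈ K} is compact. -/
/-!
Positive homogeneity of the cone makes `x ↦ infDist (-x) K` positively homogeneous, and strictness
makes it positive on the compact set `K ∩ sphere 0 1`, so it is bounded below by `δ ‖x‖` on `K`
for some `δ > 0`. For `α` in the order interval `[0, β]`, the point `β - α ∈ K` lies at distance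
`‖β‖` from `-α`, whence `‖α‖ ≤ ‖β‖ / δ`.
-/

open Metric

def orderInterval {V : Type*} [Sub V] (K : Set V) (β : V) : Set V :=
  {α | α ∈ K ∧ β - α ∈ K}

theorem IsClosed.orderInterval {G : Type*} [TopologicalSpace G] [Sub G] [ContinuousSub G]
    {K : Set G} (hK : IsClosed K) (β : G) : IsClosed (orderInterval K β) :=
  hK.inter (hK.preimage (continuous_const.sub continuous_id))

theorem infDist_neg_le_norm_of_sub_mem {E : Type*} [SeminormedAddCommGroup E] {K : Set E}
    {α β : E} (h : β - α ∈ K) : infDist (-α) K ≤ ‖β‖ :=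
  (infDist_le_dist_of_mem h).trans_eq <| by
    rw [dist_eq_norm, show -α - (β - α) = -β by abel, norm_neg]

section Cone

variable {V : Type*} [NormedAddCommGroup V] [NormedSpace ℝ V] {K : Set V}

open Pointwise in
theorem smul_set_eq_self_of_cone (hKcone : ∀ x ∈ K, ∀ t : ℝ, 0 ≤ t → t • x ∈ K) {t : ℝ}
    (ht : 0 < t) : t • K = K :=
  (Set.smul_set_subset_iff.2 fun x hx => hKcone x hx t ht.le).antisymm fun x hx =>
    ⟨t⁻¹ • x, hKcone x hx _ (inv_nonneg.2 ht.le), smul_inv_smul₀ ht.ne' x⟩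

open Pointwise in
theorem infDist_neg_smul_of_cone (hKcone : ∀ x ∈ K, ∀ t : ℝ, 0 ≤ t → t • x ∈ K) {t : ℝ}
    (ht : 0 < t) (x : V) : infDist (-(t • x)) K = t * infDist (-x) K := by
  have h := infDist_smul₀ ht.ne' K (-x)
  rwa [smul_set_eq_self_of_cone hKcone ht, Real.norm_of_nonneg ht.le, smul_neg] at h

theorem exists_pos_mul_norm_le_infDist_neg [ProperSpace V] (hKclosed : IsClosed K)
    (hKcone : ∀ x ∈ K, ∀ t : ℝ, 0 ≤ t → t • x ∈ K) (hKstrict : K ∩ (-K) = {0}) :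
    ∃ δ > 0, ∀ x ∈ K, δ * ‖x‖ ≤ infDist (-x) K := by
  have hpos : ∀ x ∈ sphere (0 : V) 1 ∩ K, 0 < infDist (-x) K := by
    rintro x ⟨hx1, hxK⟩
    refine (hKclosed.notMem_iff_infDist_pos ⟨x, hxK⟩).1 fun hnx => ?_
    have hx0 : x ∈ K ∩ (-K) := ⟨hxK, Set.mem_neg.2 hnx⟩
    rw [hKstrict, Set.mem_singleton_iff] at hx0
    simp [hx0] at hx1
  obtain ⟨δ, hδ, hδle⟩ := ((isCompact_sphere (0 : V) 1).inter_right hKclosed).exists_forall_le'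
    ((continuous_infDist_pt K).comp continuous_neg).continuousOn hpos
  refine ⟨δ, hδ, fun x hx => ?_⟩
  rcases eq_or_ne x 0 with rfl | hx0
  · simp [infDist_nonneg]
  have hn : 0 < ‖x‖ := norm_pos_iff.2 hx0
  have hunit : ‖x‖⁻¹ • x ∈ sphere (0 : V) 1 ∩ K :=
    ⟨by simp [norm_smul, hn.ne'], hKcone x hx _ (inv_nonneg.2 hn.le)⟩
  calc δ * ‖x‖ ≤ infDist (-(‖x‖⁻¹ • x)) K * ‖x‖ := by gcongr; exact hδle _ hunit
    _ = infDist (-x) K := by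
      rw [infDist_neg_smul_of_cone hKcone (inv_pos.2 hn), mul_comm, ← mul_assoc,
        mul_inv_cancel₀ hn.ne', one_mul]

theorem isBounded_orderInterval [ProperSpace V] (hKclosed : IsClosed K)
    (hKcone : ∀ x ∈ K, ∀ t : ℝ, 0 ≤ t → t • x ∈ K) (hKstrict : K ∩ (-K) = {0}) (β : V) :
    Bornology.IsBounded (orderInterval K β) := by
  obtain ⟨δ, hδ, hle⟩ := exists_pos_mul_norm_le_infDist_neg hKclosed hKcone hKstrict
  refine isBounded_iff_forall_norm_le.2 ⟨‖β‖ / δ, fun α ⟨hα, hβα⟩ => ?_⟩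
  rw [le_div_iff₀' hδ]
  exact (hle α hα).trans (infDist_neg_le_norm_of_sub_mem hβα)

end Cone

theorem order_interval_compact_general
    (V : Type*) [NormedAddCommGroup V] [NormedSpace ℝ V] [FiniteDimensional ℝ V]
    (K : Set V) (hKclosed : IsClosed K)
    (hKcone : ∀ x ∈ K, ∀ t : ℝ, 0 ≤ t → t • x ∈ K)
    (hKstrict : K ∩ (-K) = {0})
    (β : V) :
    IsCompact {α : V | α ∈ K ∧ β - α ∈ K} :=
  isCompact_of_isClosed_isBounded (hKclosed.orderInterval β)
    (isBounded_orderInterval hKclosed hKcone hKstrict β)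

/-- In a finite-dimensional real normed vector space, the order interval
`{α | α ∈ K ∧ β - α ∈ K}` of a strict closed convex cone `K` is compact. -/
theorem order_interval_compact
    (V : Type*) [NormedAddCommGroup V] [NormedSpace ℝ V] [FiniteDimensional ℝ V]
    (K : Set V) (hKclosed : IsClosed K) (hKconv : Convex ℝ K)
    (hKcone : ∀ x ∈ K, ∀ t : ℝ, 0 ≤ t → t • x ∈ K)
    (hKstrict : K ∩ (-K) = {0})
    (β : V) (hβ : β ∈ K) :
    IsCompact {α : V | α ∈ K ∧ β - α ∈ K} :=
  order_interval_compact_general V K hKclosed hKcone hKstrict β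
end

section
/- Let (s_0, ..., s_d) be positive reals with s_i^2 ≥ s_{i-1} s_{i+1} for 1 ≤ i ≤ d−1. Then the following are equivalent: (1) s_i^2 = s_{i-1} s_{i+1} for all 1 ≤ i ≤ d−1; (2) s_i^d = s_0^{d−i} s_d^i for all 0 ≤ i ≤ d; (3) s_{d−1}^d = s_0 s_d^{d−1}. -/
/-!
Taking logarithms, `t i = log (s i)` is concave on `{0, …, d}`, and the three conditions become:
all second differences of `t` vanish; `t` is affine, i.e. lies on the chord from `t 0` to `t d`;
`t (d - 1)` lies on that chord. The increments `t (j + 1) - t j` of a concave sequence decrease, and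
the last condition says that the first `d - 1` of them sum to `d - 1` times the last one, so they
are all equal.
-/

open Finset Real

section ConcaveSequence

variable {t : ℕ → ℝ} {d : ℕ}

lemma eq_add_mul_of_forall_succ_sub_eq {n : ℕ} {c : ℝ} (h : ∀ j < n, t (j + 1) - t j = c) :
    ∀ i ≤ n, t i = t 0 + i * c := by
  intro i hi
  have hsum : t i - t 0 = ∑ j ∈ range i, c :=
    (sum_range_sub t i).symm.trans (sum_congr rfl fun j hj => h j (by simp at hj; omega))
  rw [sum_const, card_range, nsmul_eq_mul] at hsum
  linarith

lemma succ_sub_eq_of_forall_two_mul_eq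
    (h : ∀ i, 1 ≤ i → i ≤ d - 1 → 2 * t i = t (i - 1) + t (i + 1)) :
    ∀ j < d, t (j + 1) - t j = t 1 - t 0 := by
  intro j hj
  induction j with
  | zero => rfl
  | succ j ih =>
    have := h (j + 1) (by omega) (by omega)
    simp only [Nat.add_sub_cancel] at this
    linarith [ih (by omega)]

lemma chord_of_forall_two_mul_eq
    (h : ∀ i, 1 ≤ i → i ≤ d - 1 → 2 * t i = t (i - 1) + t (i + 1)) :
    ∀ i ≤ d, (d : ℝ) * t i = ((d - i : ℕ) : ℝ) * t 0 + i * t d := by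
  intro i hi
  have hlin := eq_add_mul_of_forall_succ_sub_eq (succ_sub_eq_of_forall_two_mul_eq h)
  rw [hlin i hi, hlin d le_rfl, Nat.cast_sub hi]
  ring

lemma chord_pred_of_chord (hd : 1 ≤ d)
    (h : ∀ i ≤ d, (d : ℝ) * t i = ((d - i : ℕ) : ℝ) * t 0 + i * t d) :
    (d : ℝ) * t (d - 1) = t 0 + ((d - 1 : ℕ) : ℝ) * t d := by
  simpa [Nat.sub_sub_self hd] using h (d - 1) (Nat.sub_le d 1)

lemma antitoneOn_succ_sub_of_concave
    (hc : ∀ i, 1 ≤ i → i ≤ d - 1 → t (i - 1) + t (i + 1) ≤ 2 * t i) :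
    AntitoneOn (fun j => t (j + 1) - t j) (Set.Iic (d - 1)) := by
  refine antitoneOn_of_add_one_le Set.ordConnected_Iic fun j _ _ hj => ?_
  have := hc (j + 1) (by omega) hj
  simp only [Nat.add_sub_cancel] at this
  linarith

lemma forall_two_mul_eq_of_chord_pred (hd : 1 ≤ d)
    (hc : ∀ i, 1 ≤ i → i ≤ d - 1 → t (i - 1) + t (i + 1) ≤ 2 * t i)
    (h : (d : ℝ) * t (d - 1) = t 0 + ((d - 1 : ℕ) : ℝ) * t d) :
    ∀ i, 1 ≤ i → i ≤ d - 1 → 2 * t i = t (i - 1) + t (i + 1) := by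
  set u : ℕ → ℝ := fun j => t (j + 1) - t j with hu
  have hanti := antitoneOn_succ_sub_of_concave hc
  have hle : ∀ j ∈ range (d - 1), u (d - 1) ≤ u j := fun j hj =>
    hanti (Set.mem_Iic.2 (by simp at hj; omega)) (Set.mem_Iic.2 le_rfl) (by simp at hj; omega)
  have hsum : ∑ j ∈ range (d - 1), u (d - 1) = ∑ j ∈ range (d - 1), u j := by
    rw [sum_range_sub, sum_const, card_range, nsmul_eq_mul, hu]
    simp only [Nat.sub_add_cancel hd]
    rw [Nat.cast_sub hd] at h ⊢
    push_cast at h ⊢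
    linarith
  have heq : ∀ j ≤ d - 1, u j = u (d - 1) := fun j hj =>
    hj.eq_or_lt.elim (· ▸ rfl) fun hlt => ((sum_eq_sum_iff_of_le hle).1 hsum j (by simpa)).symm
  intro i hi1 hi2
  have := (heq (i - 1) (by omega)).trans (heq i hi2).symm
  simp only [hu, Nat.sub_add_cancel hi1] at this
  linarith

theorem concave_equality_equivalences (hd : 1 ≤ d)
    (hc : ∀ i, 1 ≤ i → i ≤ d - 1 → t (i - 1) + t (i + 1) ≤ 2 * t i) :
    ((∀ i, 1 ≤ i → i ≤ d - 1 → 2 * t i = t (i - 1) + t (i + 1)) ↔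
      ∀ i ≤ d, (d : ℝ) * t i = ((d - i : ℕ) : ℝ) * t 0 + i * t d) ∧
    ((∀ i ≤ d, (d : ℝ) * t i = ((d - i : ℕ) : ℝ) * t 0 + i * t d) ↔
      (d : ℝ) * t (d - 1) = t 0 + ((d - 1 : ℕ) : ℝ) * t d) :=
  ⟨⟨chord_of_forall_two_mul_eq, fun h =>
      forall_two_mul_eq_of_chord_pred hd hc (chord_pred_of_chord hd h)⟩,
    ⟨chord_pred_of_chord hd, fun h => chord_of_forall_two_mul_eq
      (forall_two_mul_eq_of_chord_pred hd hc h)⟩⟩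

end ConcaveSequence

lemma pow_eq_pow_mul_pow_iff_log {a b c : ℝ} (ha : 0 < a) (hb : 0 < b) (hc : 0 < c)
    (k m n : ℕ) : a ^ k = b ^ m * c ^ n ↔ k * log a = m * log b + n * log c := by
  rw [← log_injOn_pos.eq_iff (pow_pos ha k) (mul_pos (pow_pos hb m) (pow_pos hc n)),
    log_mul (pow_pos hb m).ne' (pow_pos hc n).ne', log_pow, log_pow, log_pow]

lemma mul_pow_le_pow_iff_log {a b c : ℝ} (ha : 0 < a) (hb : 0 < b) (hc : 0 < c)
    (k m n : ℕ) : b ^ m * c ^ n ≤ a ^ k ↔ m * log b + n * log c ≤ k * log a := by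
  rw [← log_le_log_iff (mul_pos (pow_pos hb m) (pow_pos hc n)) (pow_pos ha k),
    log_mul (pow_pos hb m).ne' (pow_pos hc n).ne', log_pow, log_pow, log_pow]

/-- Equivalence of the three equality conditions for a positive log-concave sequence. -/
theorem log_concave_equality_equivalences
    (d : ℕ) (hd : 2 ≤ d) (s : ℕ → ℝ)
    (hpos : ∀ i ≤ d, 0 < s i)
    (hlog : ∀ i, 1 ≤ i → i ≤ d - 1 → s i ^ 2 ≥ s (i - 1) * s (i + 1)) :
    ((∀ i, 1 ≤ i → i ≤ d - 1 → s i ^ 2 = s (i - 1) * s (i + 1)) ↔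
      (∀ i ≤ d, s i ^ d = s 0 ^ (d - i) * s d ^ i)) ∧
    ((∀ i ≤ d, s i ^ d = s 0 ^ (d - i) * s d ^ i) ↔
      s (d - 1) ^ d = s 0 * s d ^ (d - 1)) := by
  have h1 : (∀ i, 1 ≤ i → i ≤ d - 1 → s i ^ 2 = s (i - 1) * s (i + 1)) ↔
      ∀ i, 1 ≤ i → i ≤ d - 1 → 2 * log (s i) = log (s (i - 1)) + log (s (i + 1)) :=
    forall₃_congr fun i hi1 hi2 => by
      simpa using pow_eq_pow_mul_pow_iff_log (hpos i (by omega)) (hpos (i - 1) (by omega))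
        (hpos (i + 1) (by omega)) 2 1 1
  have h2 : (∀ i ≤ d, s i ^ d = s 0 ^ (d - i) * s d ^ i) ↔
      ∀ i ≤ d, (d : ℝ) * log (s i) = ((d - i : ℕ) : ℝ) * log (s 0) + i * log (s d) :=
    forall₂_congr fun i hi =>
      pow_eq_pow_mul_pow_iff_log (hpos i hi) (hpos 0 (by omega)) (hpos d le_rfl) _ _ _
  have h3 : s (d - 1) ^ d = s 0 * s d ^ (d - 1) ↔
      (d : ℝ) * log (s (d - 1)) = log (s 0) + ((d - 1 : ℕ) : ℝ) * log (s d) := by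
    simpa using pow_eq_pow_mul_pow_iff_log (hpos (d - 1) (by omega)) (hpos 0 (by omega))
      (hpos d le_rfl) d 1 (d - 1)
  have hconc : ∀ i, 1 ≤ i → i ≤ d - 1 → log (s (i - 1)) + log (s (i + 1)) ≤ 2 * log (s i) :=
    fun i hi1 hi2 => by
      simpa using (mul_pow_le_pow_iff_log (hpos i (by omega)) (hpos (i - 1) (by omega))
        (hpos (i + 1) (by omega)) 2 1 1).1 (by simpa using hlog i hi1 hi2)
  rw [h1, h2, h3]
  exact concave_equality_equivalences (t := fun i => log (s i)) (by omega) hconc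
end

section
/- Let A be a symmetric d-multilinear form on a real vector space, nonnegative on a convex cone N, satisfying the Khovanskii–Teissier inequality A(x^{[i]}, y^{[d−i]}) ≥ A(x^{[d]})^{i/d} A(y^{[d]})^{(d−i)/d} for x, y ∈ N and 0 ≤ i ≤ d. Then the function x ↦ A(x^{[d]})^{1/d} is superadditive on N: A((x+y)^{[d]})^{1/d} ≥ A(x^{[d]})^{1/d} + A(y^{[d]})^{1/d}. -/
/-!
Write `u = A(x^[d])^{1/d}` and `v = A(y^[d])^{1/d}`. Multilinearity expands `A((x+y)^[d])` as a
sum over subsets `s` of the slots, and by symmetry the term of `s` equals `A(x^[#s], y^[d-#s])`,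
which the Khovanskii–Teissier inequality bounds below by `u^#s v^(d-#s)`. Summing, the binomial
theorem gives `A((x+y)^[d]) ≥ (u+v)^d`; take `d`-th roots.
-/

open Finset

theorem Finset.exists_perm_mem_iff_of_card_eq {α : Type*} [Fintype α] [DecidableEq α]
    {s t : Finset α} (h : #s = #t) : ∃ σ : Equiv.Perm α, ∀ a, σ a ∈ t ↔ a ∈ s :=
  ⟨(equivOfCardEq h).extendSubtype, fun a => by
    by_cases ha : a ∈ s
    · simpa [ha] using (equivOfCardEq h).extendSubtype_mem a ha
    · simpa [ha] using (equivOfCardEq h).extendSubtype_not_mem a ha⟩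

theorem apply_piecewise_eq_of_card_eq {ι V β : Type*} [Fintype ι] [DecidableEq ι]
    {F : (ι → V) → β} (hF : ∀ (z : ι → V) (σ : Equiv.Perm ι), F (z ∘ σ) = F z)
    (x y : V) {s t : Finset ι} (h : #s = #t) :
    F (s.piecewise (fun _ => x) (fun _ => y)) = F (t.piecewise (fun _ => x) (fun _ => y)) := by
  obtain ⟨σ, hσ⟩ := exists_perm_mem_iff_of_card_eq h.symm
  rw [← hF _ σ]
  congr 1
  ext a
  simp [Finset.piecewise, hσ]

theorem MultilinearMap.add_pow_le_apply_add {ι V : Type*} [Fintype ι] [DecidableEq ι]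
    [AddCommGroup V] [Module ℝ V] (A : MultilinearMap ℝ (fun _ : ι => V) ℝ) {x y : V} {u v : ℝ}
    (h : ∀ s : Finset ι,
      u ^ #s * v ^ (Fintype.card ι - #s) ≤ A (s.piecewise (fun _ => x) (fun _ => y))) :
    (u + v) ^ Fintype.card ι ≤ A fun _ => x + y := by
  rw [← Fintype.sum_pow_mul_eq_add_pow, show (fun _ : ι => x + y) = (fun _ => x) + (fun _ => y)
    from rfl, A.map_add_univ]
  exact sum_le_sum fun s _ => h s

theorem Real.rpow_natCast_div {a : ℝ} (ha : 0 ≤ a) (i d : ℕ) :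
    a ^ ((i : ℝ) / d) = (a ^ ((1 : ℝ) / d)) ^ i := by
  rw [← Real.rpow_mul_natCast ha, one_div_mul_eq_div]

theorem kt_implies_superadditive_general
    (V : Type*) [AddCommGroup V] [Module ℝ V]
    (d : ℕ) (hd : 1 ≤ d) (A : MultilinearMap ℝ (fun _ : Fin d => V) ℝ)
    (N : Set V)
    (hsym : ∀ (z : Fin d → V) (σ : Equiv.Perm (Fin d)), A (z ∘ σ) = A z)
    (hpos : ∀ z : Fin d → V, (∀ i, z i ∈ N) → 0 ≤ A z)
    (hKT : ∀ x ∈ N, ∀ y ∈ N, ∀ i ≤ d,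
      A (fun j : Fin d => if (j : ℕ) < i then x else y) ≥
        (A fun _ => x) ^ ((i : ℝ) / d) * (A fun _ => y) ^ (((d - i : ℕ) : ℝ) / d)) :
    ∀ x ∈ N, ∀ y ∈ N,
      (A fun _ => x + y) ^ ((1 : ℝ) / d) ≥
        (A fun _ => x) ^ ((1 : ℝ) / d) + (A fun _ => y) ^ ((1 : ℝ) / d) := by
  intro x hx y hy
  have ha : 0 ≤ A fun _ => x := hpos _ fun _ => hx
  have hb : 0 ≤ A fun _ => y := hpos _ fun _ => hy
  have hterm (s : Finset (Fin d)) :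
      (A (fun _ => x) ^ ((1 : ℝ) / d)) ^ #s * (A (fun _ => y) ^ ((1 : ℝ) / d)) ^ (d - #s) ≤
        A (s.piecewise (fun _ => x) (fun _ => y)) := by
    have hs : #s ≤ d := by simpa using card_le_univ s
    have hinit : #{j : Fin d | (j : ℕ) < #s} = #s := by simp [Fin.card_filter_val_lt, hs]
    rw [apply_piecewise_eq_of_card_eq hsym x y hinit.symm, ← Real.rpow_natCast_div ha,
      ← Real.rpow_natCast_div hb]
    convert hKT x hx y hy #s hs using 2
    ext j
    simp [Finset.piecewise]
  have hsum := A.add_pow_le_apply_add (by simpa using hterm)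
  rw [Fintype.card_fin] at hsum
  calc _ = ((_ + _) ^ d) ^ ((1 : ℝ) / d) := by
        rw [one_div, Real.pow_rpow_inv_natCast (by positivity) (by omega)]
    _ ≤ _ := Real.rpow_le_rpow (by positivity) hsum (by positivity)

/-- The Khovanskii–Teissier inequalities for a symmetric `d`-multilinear form
nonnegative on a cone `N` imply superadditivity of `x ↦ A(x,...,x)^{1/d}` on `N`. -/
theorem kt_implies_superadditive
    (V : Type*) [AddCommGroup V] [Module ℝ V]
    (d : ℕ) (hd : 1 ≤ d) (A : MultilinearMap ℝ (fun _ : Fin d => V) ℝ)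
    (N : Set V)
    (hadd : ∀ x ∈ N, ∀ y ∈ N, x + y ∈ N)
    (hsym : ∀ (z : Fin d → V) (σ : Equiv.Perm (Fin d)), A (z ∘ σ) = A z)
    (hpos : ∀ z : Fin d → V, (∀ i, z i ∈ N) → 0 ≤ A z)
    (hKT : ∀ x ∈ N, ∀ y ∈ N, ∀ i ≤ d,
      A (fun j : Fin d => if (j : ℕ) < i then x else y) ≥
        (A fun _ => x) ^ ((i : ℝ) / d) * (A fun _ => y) ^ (((d - i : ℕ) : ℝ) / d)) :
    ∀ x ∈ N, ∀ y ∈ N,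
      (A fun _ => x + y) ^ ((1 : ℝ) / d) ≥
        (A fun _ => x) ^ ((1 : ℝ) / d) + (A fun _ => y) ^ ((1 : ℝ) / d) :=
  kt_implies_superadditive_general V d hd A N hsym hpos hKT
end
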